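/- arXiv:1503.02843 — 2 statements merged into one kernel-verified Lean document; each statement's English description precedes it below -/
import Mathlib

section
/- The efficiencies satisfy the strict ordering η_ON < η_EEE ≤ η_EEEP whenever N̄ > 0, T̄_pack > 0, T_trans > 0, 0 < N̄ T̄_pack < T_B - T_trans, and κ = (T' + T_B)/T ≤ 1. -/
/-- The efficiencies satisfy the strict ordering `η_ON < η_EEE ≤ η_EEEP` whenever
`N̄ > 0`, `T̄_pack > 0`, `T_trans > 0`, `0 < N̄ T̄_pack < T_B - T_trans`, and
`κ = (T' + T_B)/T ≤ 1`. -/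
theorem stmt10 (N Tpack Ttrans TB T T' : ℝ)
    (hN : 0 < N) (hTpack : 0 < Tpack) (hTtrans : 0 < Ttrans) (hTB : 0 < TB)
    (hT' : 0 < T') (hT'T : T' < T)
    (hload : N * Tpack < TB - Ttrans)
    (hκ : (T' + TB) / T ≤ 1) :
    (Tpack / TB) * N < N / (N + Ttrans / Tpack) ∧
    N / (N + Ttrans / Tpack) ≤ N / (N + (Ttrans / Tpack) * ((T' + TB) / T)) := by
  have hT : 0 < T := lt_trans hT' hT'T
  have hx : 0 < Ttrans / Tpack := by positivity
  have hκ0 : 0 < (T' + TB) / T := by positivity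
  constructor
  · rw [div_mul_eq_mul_div, div_lt_div_iff₀ hTB (by positivity)]
    have hc : Ttrans / Tpack * Tpack = Ttrans := div_mul_cancel₀ _ hTpack.ne'
    nlinarith [mul_pos hN hTpack]
  · have h1 : 0 < N + Ttrans / Tpack * ((T' + TB) / T) := by positivity
    gcongr
    nlinarith
end

section
/- Efficiency upper bound for EEEP: for all N̄ satisfying 0 ≤ N̄ T̄_pack ≤ T_B - T_trans κ, where κ = (T' + T_B)/T ∈ (0, 1], it holds η_EEEP = N̄/(N̄ + (T_trans/T̄_pack)κ) ≤ 1 - (T_trans/T_B)κ, and this bound is no smaller than the EEE bound 1 - T_trans/T_B. -/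
/-- Efficiency upper bound for EEEP: with `κ = (T' + T_B)/T ∈ (0, 1]`, for all `N̄` with
`0 ≤ N̄ T̄_pack ≤ T_B - T_trans κ`, it holds
`η_EEEP = N̄/(N̄ + (T_trans/T̄_pack)κ) ≤ 1 - (T_trans/T_B)κ`, and this bound is no
smaller than the EEE bound `1 - T_trans/T_B`. -/
theorem stmt16 (TB Ttrans Tpack T T' : ℝ) (hTB : 0 < TB) (hTtrans : 0 < Ttrans)
    (hle : Ttrans ≤ TB) (hTpack : 0 < Tpack) (hT' : 0 < T') (hT'T : T' < T)
    (hκ : (T' + TB) / T ≤ 1) :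
    (∀ N : ℝ, 0 ≤ N * Tpack → N * Tpack ≤ TB - Ttrans * ((T' + TB) / T) →
      N / (N + (Ttrans / Tpack) * ((T' + TB) / T))
        ≤ 1 - (Ttrans / TB) * ((T' + TB) / T)) ∧
    1 - Ttrans / TB ≤ 1 - (Ttrans / TB) * ((T' + TB) / T) := by
  have hT : 0 < T := hT'.trans hT'T
  have hκpos : 0 < (T' + TB) / T := by positivity
  constructor
  · intro N h0 h1
    have hN : 0 ≤ N := nonneg_of_mul_nonneg_right (mul_comm N Tpack ▸ h0) hTpack
    have hD : 0 < N + (Ttrans / Tpack) * ((T' + TB) / T) := by positivity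
    rw [div_le_iff₀ hD]
    have hA : (Ttrans / Tpack) * ((T' + TB) / T) * Tpack = Ttrans * ((T' + TB) / T) := by
      field_simp
    have hB : (Ttrans / TB) * ((T' + TB) / T) * TB = Ttrans * ((T' + TB) / T) := by
      field_simp
    have hN' : N ≤ (TB - Ttrans * ((T' + TB) / T)) / Tpack := by
      rw [le_div_iff₀ hTpack]; linarith
    have hc : 0 < (Ttrans / TB) * ((T' + TB) / T) := by positivity
    nlinarith [mul_le_mul_of_nonneg_left h1 hc.le, hTpack, hD.le,
      mul_pos hc hTpack]
  · have h1 : (Ttrans / TB) * ((T' + TB) / T) ≤ Ttrans / TB * 1 :=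
      mul_le_mul_of_nonneg_left hκ (by positivity)
    simp at h1; linarith
end
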